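/- arXiv:2303.03962 — 5 statements merged into one kernel-verified Lean document; each statement's English description precedes it below -/
import Mathlib

section
/- Let τ ≥ 1 be an integer, let V be a nonempty finite set with |V| = n, and let G_1, …, G_τ be simple graphs on V. Let δ = min_{v ∈ V} ∑_{i=1}^{τ} deg_{G_i}(v). Then there exists a multi-layer dominating set D ⊆ V × {1,…,τ} with |D| ≤ (nτ/(τ + δ)) · (ln((τ + δ)/τ) + 1). -/
noncomputable def fpot (p : ℝ) (u : ℕ) : ℝ :=
  if (u : ℝ) * p ≤ 1 then u else (Real.log ((u : ℝ) * p) + 1) / p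

lemma fpot_step (p : ℝ) (hp0 : 0 < p) (u u' : ℕ)
    (h1 : u' < u) (h2 : (u' : ℝ) ≤ (1 - p) * u) :
    fpot p u' + 1 ≤ fpot p u := by
  have h1R : (u' : ℝ) + 1 ≤ u := by exact_mod_cast h1
  unfold fpot
  split_ifs with hA hB hB
  · linarith
  · -- u' small, u big : B2
    rw [le_div_iff₀ hp0]
    set s := (u : ℝ) * p with hs
    set t := (u' : ℝ) * p with ht
    have hs1 : 1 < s := not_le.mp hB
    have hs0 : 0 < s := by linarith
    have ht1 : t ≤ 1 := hA
    have hts : t ≤ (1 - p) * s := by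
      have := mul_le_mul_of_nonneg_right h2 hp0.le
      calc t ≤ (1 - p) * u * p := this
        _ = (1 - p) * s := by rw [hs]; ring
    have hlog : 1 - 1/s ≤ Real.log s := by
      have h := Real.log_le_sub_one_of_pos (show (0:ℝ) < 1/s by positivity)
      rw [Real.log_div one_ne_zero hs0.ne', Real.log_one] at h
      linarith
    have hinv : s * (1 / s) = 1 := by field_simp
    rcases le_or_gt p (Real.log s) with hc | hc
    · have : ((u' : ℝ) + 1) * p = t + p := by ring
      rw [this]; linarith
    · have hps : s - 1 ≤ p * s := by
        nlinarith [mul_le_mul_of_nonneg_left hlog hs0.le]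
      have : ((u' : ℝ) + 1) * p = t + p := by ring
      rw [this]
      nlinarith [mul_le_mul_of_nonneg_left hlog hs0.le,
        mul_le_mul_of_nonneg_right hps (sub_nonneg.mpr hs1.le),
        mul_le_mul_of_nonneg_left hts hs0.le]
  · -- u' big, u small : impossible
    exfalso
    have : (u' : ℝ) * p ≤ (u : ℝ) * p := by
      apply mul_le_mul_of_nonneg_right _ hp0.le
      exact_mod_cast h1.le
    linarith [not_le.mp hA]
  · -- both big : B1
    have hu'1 : 1 < (u' : ℝ) * p := not_le.mp hA
    have hu'0 : (0:ℝ) < u' := by nlinarith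
    have h1p : 0 < 1 - p := by
      rcases lt_or_ge 0 (1 - p) with h | h
      · exact h
      · exfalso; nlinarith
    have key : Real.log ((u' : ℝ) * p) + p ≤ Real.log ((u : ℝ) * p) := by
      have hle : Real.log ((u' : ℝ) * p) ≤ Real.log ((1 - p) * ((u : ℝ) * p)) := by
        apply Real.log_le_log (by nlinarith)
        nlinarith
      rw [Real.log_mul h1p.ne' (ne_of_gt (by nlinarith : (0:ℝ) < (u : ℝ) * p))] at hle
      have hlp : Real.log (1 - p) ≤ -p := by
        rw [Real.log_le_iff_le_exp h1p]
        linarith [Real.add_one_le_exp (-p)]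
      linarith
    have h2' : (Real.log ((u' : ℝ) * p) + 1 + p) / p ≤ (Real.log ((u : ℝ) * p) + 1) / p :=
      (div_le_div_iff_of_pos_right hp0).mpr (by linarith)
    rw [add_div, div_self hp0.ne'] at h2'
    linarith

lemma greedy_cover{V : Type*} [Fintype V] [DecidableEq V] {τ : ℕ}
    (G : Fin τ → SimpleGraph V) [∀ i, DecidableRel (G i).Adj]
    (p : ℝ) (hp0 : 0 < p)
    (hav : ∀ U : Finset V, U.Nonempty →
      ∃ wi : V × Fin τ, p * U.card ≤
        ((U.filter (fun v => v = wi.1 ∨ (G wi.2).Adj v wi.1)).card : ℝ)) :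
    ∀ u : ℕ, ∀ U : Finset V, U.card = u →
      ∃ D : Finset (V × Fin τ),
        (∀ v ∈ U, (∃ i, (v, i) ∈ D) ∨ ∃ w i, (w, i) ∈ D ∧ (G i).Adj v w) ∧
        (D.card : ℝ) ≤ fpot p u := by
  intro u
  induction u using Nat.strong_induction_on with
  | _ u IH =>
    intro U hU
    rcases Nat.eq_zero_or_pos u with h0 | hpos
    · subst h0
      refine ⟨∅, ?_, ?_⟩
      · intro v hv
        simp [Finset.card_eq_zero.mp hU] at hv
      · simp [fpot]
    · have hUne : U.Nonempty := by
        rw [← Finset.card_pos, hU]; exact hpos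
      obtain ⟨wi, hwi⟩ := hav U hUne
      set C := U.filter (fun v => v = wi.1 ∨ (G wi.2).Adj v wi.1) with hC
      have hCU : C ⊆ U := Finset.filter_subset _ _
      have hCpos : 0 < C.card := by
        have hpu : (0:ℝ) < p * u := by positivity
        have : (0:ℝ) < (C.card : ℝ) := lt_of_lt_of_le (by rw [hU] at hwi ⊢; linarith) hwi
        exact_mod_cast this
      have hcard : (U \ C).card = u - C.card := by
        rw [Finset.card_sdiff_of_subset hCU, hU]
      have hu' : (U \ C).card < u := by
        rw [hcard]
        omega
      have hCle : C.card ≤ u := by rw [← hU]; exact Finset.card_le_card hCU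
      obtain ⟨D', hD'dom, hD'card⟩ := IH _ hu' (U \ C) rfl
      refine ⟨insert wi D', ?_, ?_⟩
      · intro v hv
        by_cases hvC : v ∈ C
        · rw [hC, Finset.mem_filter] at hvC
          rcases hvC.2 with h | h
          · left
            refine ⟨wi.2, Finset.mem_insert.mpr (Or.inl ?_)⟩
            rw [h]
          · right
            exact ⟨wi.1, wi.2, by simp, h⟩
        · have := hD'dom v (Finset.mem_sdiff.mpr ⟨hv, hvC⟩)
          rcases this with ⟨i, hi⟩ | ⟨w, i, hwiD, hadj⟩
          · exact Or.inl ⟨i, Finset.mem_insert_of_mem hi⟩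
          · exact Or.inr ⟨w, i, Finset.mem_insert_of_mem hwiD, hadj⟩
      · have hle : ((insert wi D').card : ℝ) ≤ (D'.card : ℝ) + 1 := by
          exact_mod_cast Finset.card_insert_le _ _
        have hstep : fpot p (U \ C).card + 1 ≤ fpot p u := by
          apply fpot_step p hp0 _ _ hu'
          rw [hcard]
          have h1 : ((u - C.card : ℕ) : ℝ) = (u : ℝ) - C.card := by
            push_cast [hCle]; ring
          rw [h1, hU] at *
          nlinarith [hwi]
        linarith

/-- For graphs `G 1, …, G τ` (τ ≥ 1) on a common nonempty finite vertex set
`V` of size `n`, letting `δ = min_{v ∈ V} ∑ i deg_{G i}(v)`, there is a multi-layer dominating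
set `D ⊆ V × {1,…,τ}` with `|D| ≤ (nτ/(τ+δ)) · (ln((τ+δ)/τ) + 1)`. -/
theorem exists_multilayer_dominatingSet {V : Type*} [Fintype V] [Nonempty V]
    (n : ℕ) (hn : Fintype.card V = n) (τ : ℕ) (hτ : 1 ≤ τ)
    (G : Fin τ → SimpleGraph V) [∀ i, DecidableRel (G i).Adj]
    (δ : ℕ)
    (hδ : δ = Finset.univ.inf' Finset.univ_nonempty (fun v : V => ∑ i, (G i).degree v)) :
    ∃ D : Finset (V × Fin τ),
      (∀ v : V, (∃ i, (v, i) ∈ D) ∨ ∃ w i, (w, i) ∈ D ∧ (G i).Adj v w) ∧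
      (D.card : ℝ) ≤
        ((n : ℝ) * τ) / ((τ : ℝ) + δ) * (Real.log (((τ : ℝ) + δ) / τ) + 1) := by
  classical
  have hn1 : 1 ≤ n := by rw [← hn]; exact Fintype.card_pos
  have hτR : (0:ℝ) < (τ : ℝ) := by exact_mod_cast hτ
  have hnR : (0:ℝ) < (n : ℝ) := by exact_mod_cast hn1
  set p : ℝ := ((τ : ℝ) + δ) / ((n : ℝ) * τ) with hp
  have hp0 : 0 < p := by positivity
  -- the min is ≤ each value
  have hδle : ∀ v : V, δ ≤ ∑ i, (G i).degree v := by
    intro v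
    rw [hδ]
    exact Finset.inf'_le _ (Finset.mem_univ v)
  -- averaging
  have hav : ∀ U : Finset V, U.Nonempty →
      ∃ wi : V × Fin τ, p * U.card ≤
        ((U.filter (fun v => v = wi.1 ∨ (G wi.2).Adj v wi.1)).card : ℝ) := by
    intro U hUne
    have key : U.card * (τ + δ) ≤
        ∑ wi : V × Fin τ, (U.filter (fun v => v = wi.1 ∨ (G wi.2).Adj v wi.1)).card := by
      have swap : ∑ wi : V × Fin τ, (U.filter (fun v => v = wi.1 ∨ (G wi.2).Adj v wi.1)).card
          = ∑ v ∈ U, ∑ wi : V × Fin τ,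
              (if v = wi.1 ∨ (G wi.2).Adj v wi.1 then 1 else 0) := by
        simp_rw [Finset.card_filter]
        rw [Finset.sum_comm]
      have inner : ∀ v : V, (∑ wi : V × Fin τ,
          (if v = wi.1 ∨ (G wi.2).Adj v wi.1 then 1 else 0)) = τ + ∑ i, (G i).degree v := by
        intro v
        rw [Fintype.sum_prod_type, Finset.sum_comm]
        have hone : ∀ i : Fin τ, (∑ w : V, if v = w ∨ (G i).Adj v w then 1 else 0)
            = 1 + (G i).degree v := by
          intro i
          have hset : Finset.univ.filter (fun w => v = w ∨ (G i).Adj v w)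
              = insert v ((G i).neighborFinset v) := by
            ext w
            simp only [Finset.mem_filter, Finset.mem_univ, true_and, Finset.mem_insert,
              SimpleGraph.mem_neighborFinset]
            rw [eq_comm]
          rw [← Finset.card_filter, hset,
            Finset.card_insert_of_notMem ((G i).notMem_neighborFinset_self v),
            (G i).card_neighborFinset_eq_degree, add_comm]
        simp only [hone]
        rw [Finset.sum_add_distrib, Finset.sum_const, Finset.card_univ, Fintype.card_fin,
          smul_eq_mul, mul_one]
      rw [swap]
      calc U.card * (τ + δ) = ∑ _v ∈ U, (τ + δ) := by rw [Finset.sum_const, smul_eq_mul]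
        _ ≤ ∑ v ∈ U, (τ + ∑ i, (G i).degree v) :=
            Finset.sum_le_sum (fun v _ => by have := hδle v; omega)
        _ = ∑ v ∈ U, ∑ wi : V × Fin τ,
              (if v = wi.1 ∨ (G wi.2).Adj v wi.1 then 1 else 0) := by
            exact Finset.sum_congr rfl (fun v _ => (inner v).symm)
    -- now extract a good pair
    haveI : Nonempty (Fin τ) := ⟨⟨0, hτ⟩⟩
    by_contra hcon
    push_neg at hcon
    have hsum : ∑ wi : V × Fin τ,
        ((U.filter (fun v => v = wi.1 ∨ (G wi.2).Adj v wi.1)).card : ℝ)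
        < ∑ _wi : V × Fin τ, p * U.card :=
      Finset.sum_lt_sum_of_nonempty Finset.univ_nonempty (fun wi _ => hcon wi)
    have hkeyR : (U.card : ℝ) * ((τ:ℝ) + δ) ≤ ∑ wi : V × Fin τ,
        ((U.filter (fun v => v = wi.1 ∨ (G wi.2).Adj v wi.1)).card : ℝ) := by
      have := (Nat.cast_le (α := ℝ)).mpr key
      push_cast at this
      exact this
    rw [Finset.sum_const, Finset.card_univ, Fintype.card_prod, Fintype.card_fin, hn,
      nsmul_eq_mul] at hsum
    have heval : ((n * τ : ℕ) : ℝ) * (p * U.card) = (U.card : ℝ) * ((τ:ℝ) + δ) := by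
      rw [hp]
      push_cast
      field_simp
    rw [heval] at hsum
    linarith
  obtain ⟨D, hdom, hcard⟩ := greedy_cover G p hp0 hav n Finset.univ (by simp [hn])
  refine ⟨D, fun v => hdom v (Finset.mem_univ v), ?_⟩
  have hnp : (n : ℝ) * p = ((τ : ℝ) + δ) / τ := by
    rw [hp]; field_simp
  have hδ0 : (0:ℝ) ≤ (δ : ℝ) := Nat.cast_nonneg δ
  refine le_trans hcard ?_
  unfold fpot
  split_ifs with h
  · -- (τ+δ)/τ ≤ 1 forces δ = 0
    rw [hnp] at h
    have h1 : (1:ℝ) ≤ ((τ:ℝ) + δ) / τ := by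
      rw [le_div_iff₀ hτR]; linarith
    have heq : ((τ:ℝ) + δ) / τ = 1 := le_antisymm h h1
    rw [heq, Real.log_one]
    have : ((τ:ℝ) + δ) = τ := by
      field_simp at heq
      rw [heq]
    rw [this]
    rw [mul_div_assoc, div_self hτR.ne']
    simp
  · rw [hnp]
    apply le_of_eq
    have hτδ : (0:ℝ) < (τ:ℝ) + δ := by linarith
    rw [hp]
    field_simp
end

section
/- Let τ ≥ 1 be an integer, let V be a nonempty finite set with |V| = n, and let G_1, …, G_τ be simple graphs on V. Let F be the simple graph on V whose edge set is the union of the edge sets of G_1, …, G_τ, and let δ_F denote the minimum degree of F. If δ_F ≥ τ·(e − 1), then there exists a multi-layer dominating set D ⊆ V × {1,…,τ} with |D| ≤ (nτ/(τ + δ_F)) · (ln((τ + δ_F)/τ) + 1). -/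
/-!
Pick every vertex–layer pair independently with probability `p`, and add a pair `(v, i₀)` for
every vertex `v` that is left undominated. A vertex has at least `τ + δ_F` pairs dominating it
(itself in each layer, and each `F`-neighbour in a layer where it is adjacent), so it is left
undominated with probability at most `(1 - p) ^ (τ + δ_F) ≤ exp (-p (τ + δ_F))`. The expected
size is therefore at most `n τ p + n exp (-p (τ + δ_F))`, and `p = ln ((τ + δ_F) / τ) / (τ + δ_F)`
gives the bound. Expectations are written as finite sums weighted by `p ^ |S| (1 - p) ^ |Sᶜ|`.
-/

open Finset

namespace Finset

variable {α : Type*} [Fintype α] [DecidableEq α]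

noncomputable def bernoulliWeight (p : ℝ) (S : Finset α) : ℝ := p ^ #S * (1 - p) ^ #Sᶜ

theorem bernoulliWeight_nonneg {p : ℝ} (hp₀ : 0 ≤ p) (hp₁ : p ≤ 1) (S : Finset α) :
    0 ≤ bernoulliWeight p S :=
  mul_nonneg (pow_nonneg hp₀ _) (pow_nonneg (sub_nonneg.2 hp₁) _)

theorem sum_bernoulliWeight_disjoint (p : ℝ) (C : Finset α) :
    ∑ S with Disjoint S C, bernoulliWeight p S = (1 - p) ^ #C := by
  have hkeep (S : Finset α) :
      ∏ x ∈ S, (if x ∈ C then 0 else p) = if Disjoint S C then p ^ #S else 0 := by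
    split_ifs with hSC
    · rw [prod_congr rfl fun x hx => if_neg (disjoint_left.1 hSC hx), prod_const]
    · obtain ⟨x, hxS, hxC⟩ := not_disjoint_iff.1 hSC
      exact prod_eq_zero hxS (if_pos hxC)
  have hfactor : ∏ x : α, ((if x ∈ C then 0 else p) + (1 - p)) = (1 - p) ^ #C := by
    calc _ = ∏ x : α, if x ∈ C then 1 - p else 1 :=
          prod_congr rfl fun x _ => by split_ifs <;> ring
      _ = (1 - p) ^ #C := by rw [Fintype.prod_ite_mem, prod_const]
  rw [← hfactor, prod_add, powerset_univ, sum_filter]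
  refine sum_congr rfl fun S _ => ?_
  rw [hkeep, ← compl_eq_univ_sdiff, prod_const, bernoulliWeight, ite_mul, zero_mul]

theorem sum_bernoulliWeight (p : ℝ) : ∑ S : Finset α, bernoulliWeight p S = 1 := by
  simpa using sum_bernoulliWeight_disjoint p (∅ : Finset α)

theorem sum_bernoulliWeight_mul_card (p : ℝ) :
    ∑ S : Finset α, bernoulliWeight p S * #S = Fintype.card α * p := by
  have hmem (x : α) : ∑ S with x ∈ S, bernoulliWeight p S = p := by
    have h := sum_filter_add_sum_filter_not univ (x ∈ ·) (bernoulliWeight p)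
    simp only [← disjoint_singleton_right, sum_bernoulliWeight_disjoint, card_singleton,
      sum_bernoulliWeight] at h
    linarith
  calc ∑ S : Finset α, bernoulliWeight p S * #S
      = ∑ x : α, ∑ S with x ∈ S, bernoulliWeight p S := by
        simp_rw [sum_filter]
        rw [sum_comm]
        exact sum_congr rfl fun S _ => by
          rw [sum_ite_mem, univ_inter, sum_const, nsmul_eq_mul, mul_comm]
    _ = Fintype.card α * p := by simp [hmem]

theorem exists_le_sum_mul_of_sum_eq_one {β : Type*} {s : Finset β} {w g : β → ℝ}
    (hw₀ : ∀ b ∈ s, 0 ≤ w b) (hw₁ : ∑ b ∈ s, w b = 1) :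
    ∃ b ∈ s, g b ≤ ∑ b ∈ s, w b * g b := by
  obtain ⟨b₀, hb₀, hmin⟩ := s.exists_min_image g (nonempty_of_sum_ne_zero (hw₁ ▸ one_ne_zero))
  refine ⟨b₀, hb₀, ?_⟩
  calc g b₀ = ∑ b ∈ s, w b * g b₀ := by rw [← sum_mul, hw₁, one_mul]
    _ ≤ ∑ b ∈ s, w b * g b :=
        sum_le_sum fun b hb => mul_le_mul_of_nonneg_left (hmin b hb) (hw₀ b hb)

theorem exists_card_add_card_disjoint_le {ι : Type*} [Fintype ι] (C : ι → Finset α) {p : ℝ}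
    (hp₀ : 0 ≤ p) (hp₁ : p ≤ 1) :
    ∃ S : Finset α, (#S : ℝ) + #{i | Disjoint S (C i)} ≤
      Fintype.card α * p + ∑ i, (1 - p) ^ #(C i) := by
  have hmissed : ∑ S : Finset α, bernoulliWeight p S * #{i | Disjoint S (C i)} =
      ∑ i, (1 - p) ^ #(C i) := by
    simp_rw [← sum_bernoulliWeight_disjoint p, sum_filter, card_filter, Nat.cast_sum, mul_sum]
    rw [sum_comm]
    simp
  obtain ⟨S, -, hS⟩ := exists_le_sum_mul_of_sum_eq_one
    (g := fun S : Finset α => (#S : ℝ) + #{i | Disjoint S (C i)})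
    (fun S _ => bernoulliWeight_nonneg hp₀ hp₁ S) (sum_bernoulliWeight p)
  refine ⟨S, hS.trans_eq ?_⟩
  simp only [mul_add, sum_add_distrib, sum_bernoulliWeight_mul_card, hmissed]

end Finset

namespace SimpleGraph

variable {V ι : Type*} [Fintype V] [DecidableEq V] [Fintype ι] (G : ι → SimpleGraph V)

def IsMultilayerDominating (D : Finset (V × ι)) : Prop :=
  ∀ v, (∃ i, (v, i) ∈ D) ∨ ∃ w i, (w, i) ∈ D ∧ (G i).Adj v w

def multilayerClosedNbhd [∀ i, DecidableRel (G i).Adj] (v : V) : Finset (V × ι) :=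
  {x | x.1 = v ∨ (G x.2).Adj v x.1}

variable [∀ i, DecidableRel (G i).Adj]

theorem card_multilayerClosedNbhd (v : V) :
    #(multilayerClosedNbhd G v) = ∑ i, ((G i).degree v + 1) := by
  rw [multilayerClosedNbhd, card_filter, Fintype.sum_prod_type_right]
  refine sum_congr rfl fun i _ => ?_
  have : ({w | w = v ∨ (G i).Adj v w} : Finset V) = insert v ((G i).neighborFinset v) := by
    ext w; simp
  rw [← card_filter, this, card_insert_of_notMem ((G i).notMem_neighborFinset_self v),
    card_neighborFinset_eq_degree]

theorem degree_iSup_le_sum_degree [DecidableRel (⨆ i, G i).Adj] (v : V) :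
    (⨆ i, G i).degree v ≤ ∑ i, (G i).degree v := by
  have : (⨆ i, G i).neighborFinset v = univ.biUnion fun i => (G i).neighborFinset v := by
    ext w; simp
  simpa only [← card_neighborFinset_eq_degree, this] using card_biUnion_le

theorem card_add_degree_iSup_le_card_multilayerClosedNbhd [DecidableRel (⨆ i, G i).Adj]
    (v : V) :
    Fintype.card ι + (⨆ i, G i).degree v ≤ #(multilayerClosedNbhd G v) := by
  rw [card_multilayerClosedNbhd, sum_add_distrib, sum_const, card_univ, smul_eq_mul, mul_one,
    add_comm]
  exact Nat.add_le_add_right (degree_iSup_le_sum_degree G v) _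

variable [DecidableEq ι]

theorem isMultilayerDominating_union_image (S : Finset (V × ι)) (i₀ : ι) :
    IsMultilayerDominating G
      (S ∪ ({v | Disjoint S (multilayerClosedNbhd G v)} : Finset V).image (·, i₀)) := by
  intro v
  by_cases hv : Disjoint S (multilayerClosedNbhd G v)
  · exact Or.inl ⟨i₀, mem_union_right _ (mem_image_of_mem _ (by simpa using hv))⟩
  obtain ⟨⟨w, i⟩, hwS, hw⟩ := not_disjoint_iff.1 hv
  rcases (mem_filter.1 hw).2 with rfl | hadj
  · exact Or.inl ⟨i, mem_union_left _ hwS⟩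
  · exact Or.inr ⟨w, i, mem_union_left _ hwS, hadj⟩

theorem exists_isMultilayerDominating_card_le [Nonempty ι] {k : ℕ}
    (hk : ∀ v, k ≤ #(multilayerClosedNbhd G v)) {p : ℝ} (hp₀ : 0 ≤ p) (hp₁ : p ≤ 1) :
    ∃ D, IsMultilayerDominating G D ∧
      (#D : ℝ) ≤ Fintype.card V * Fintype.card ι * p + Fintype.card V * (1 - p) ^ k := by
  obtain ⟨S, hS⟩ := exists_card_add_card_disjoint_le (multilayerClosedNbhd G) hp₀ hp₁
  obtain ⟨i₀⟩ := ‹Nonempty ι›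
  refine ⟨_, isMultilayerDominating_union_image G S i₀, ?_⟩
  have hmissed : ∑ v, (1 - p) ^ #(multilayerClosedNbhd G v) ≤ Fintype.card V * (1 - p) ^ k := by
    simpa using sum_le_sum fun v (_ : v ∈ univ) =>
      pow_le_pow_of_le_one (sub_nonneg.2 hp₁) (by linarith) (hk v)
  calc (#(S ∪ ({v | Disjoint S (multilayerClosedNbhd G v)} : Finset V).image (·, i₀)) : ℝ)
      ≤ #S + #({v | Disjoint S (multilayerClosedNbhd G v)} : Finset V) := by
        exact_mod_cast (card_union_le _ _).trans (Nat.add_le_add_left card_image_le _)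
    _ ≤ _ := by rw [Fintype.card_prod, Nat.cast_mul] at hS; linarith

end SimpleGraph

open SimpleGraph

theorem mul_div_add_one_sub_div_pow_le {t : ℝ} {k : ℕ} (ht : 0 < t) (htk : t ≤ k)
    (hlog : Real.log (k / t) ≤ k) :
    t * (Real.log (k / t) / k) + (1 - Real.log (k / t) / k) ^ k ≤
      t / k * (Real.log (k / t) + 1) := by
  have hexp : (1 - Real.log (k / t) / k) ^ k ≤ t / k := by
    calc _ ≤ Real.exp (-Real.log (k / t)) := Real.one_sub_div_pow_le_exp_neg hlog
      _ = t / k := by rw [Real.exp_neg, Real.exp_log (div_pos (ht.trans_le htk) ht), inv_div]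
  calc _ ≤ t * (Real.log (k / t) / k) + t / k := by gcongr
    _ = t / k * (Real.log (k / t) + 1) := by ring

theorem exists_multilayer_dominatingSet_of_minDegree_flatten_general {V : Type*} [Fintype V]
    (n : ℕ) (hn : Fintype.card V = n) (τ : ℕ) (hτ : 1 ≤ τ)
    (G : Fin τ → SimpleGraph V)
    [DecidableRel (⨆ i, G i).Adj]
    (δF : ℕ) (hδF : δF = (⨆ i, G i).minDegree) :
    ∃ D : Finset (V × Fin τ),
      (∀ v : V, (∃ i, (v, i) ∈ D) ∨ ∃ w i, (w, i) ∈ D ∧ (G i).Adj v w) ∧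
      (D.card : ℝ) ≤
        ((n : ℝ) * τ) / ((τ : ℝ) + δF) * (Real.log (((τ : ℝ) + δF) / τ) + 1) := by
  classical
  have : Nonempty (Fin τ) := ⟨⟨0, hτ⟩⟩
  have hτ₁ : (1 : ℝ) ≤ τ := by exact_mod_cast hτ
  have hcast : ((τ + δF : ℕ) : ℝ) = τ + δF := Nat.cast_add τ δF
  have hcover (v : V) : τ + δF ≤ #(multilayerClosedNbhd G v) := by
    calc τ + δF ≤ τ + (⨆ i, G i).degree v :=
          hδF ▸ Nat.add_le_add_left (minDegree_le_degree _ v) τ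
      _ ≤ _ := by simpa using card_add_degree_iSup_le_card_multilayerClosedNbhd G v
  set L := Real.log (((τ : ℝ) + δF) / τ)
  have hL₀ : 0 ≤ L := Real.log_nonneg ((one_le_div (by positivity)).2 (by simp))
  have hLk : L ≤ τ + δF :=
    (Real.log_le_self (by positivity)).trans (div_le_self (by positivity) hτ₁)
  -- `p = L / (τ + δF)` minimises `τ p + exp (-(τ + δF) p)`
  obtain ⟨D, hD, hcard⟩ := exists_isMultilayerDominating_card_le G hcover
    (p := L / (τ + δF)) (by positivity) (div_le_one_of_le₀ hLk (by positivity))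
  refine ⟨D, hD, hcard.trans ?_⟩
  have hbound := mul_div_add_one_sub_div_pow_le (k := τ + δF) (by positivity) (by simp)
    (by rwa [hcast])
  rw [hcast] at hbound
  rw [Fintype.card_fin, hn]
  calc (n : ℝ) * τ * (L / (τ + δF)) + n * (1 - L / (τ + δF)) ^ (τ + δF)
      = n * (τ * (L / (τ + δF)) + (1 - L / (τ + δF)) ^ (τ + δF)) := by ring
    _ ≤ n * (τ / (τ + δF) * (L + 1)) := by gcongr
    _ = n * τ / (τ + δF) * (L + 1) := by ring

/-- For graphs `G 1, …, G τ` (τ ≥ 1) on a common nonempty finite vertex set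
`V` of size `n`, letting `F = ⨆ i, G i` be the union (flattened) graph with minimum degree
`δ_F`, if `δ_F ≥ τ·(e − 1)` then there is a multi-layer dominating set `D ⊆ V × {1,…,τ}` with
`|D| ≤ (nτ/(τ+δ_F)) · (ln((τ+δ_F)/τ) + 1)`. -/
theorem exists_multilayer_dominatingSet_of_minDegree_flatten {V : Type*} [Fintype V] [Nonempty V]
    (n : ℕ) (hn : Fintype.card V = n) (τ : ℕ) (hτ : 1 ≤ τ)
    (G : Fin τ → SimpleGraph V) [∀ i, DecidableRel (G i).Adj]
    [DecidableRel (⨆ i, G i).Adj]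
    (δF : ℕ) (hδF : δF = (⨆ i, G i).minDegree)
    (hbig : (τ : ℝ) * (Real.exp 1 - 1) ≤ (δF : ℝ)) :
    ∃ D : Finset (V × Fin τ),
      (∀ v : V, (∃ i, (v, i) ∈ D) ∨ ∃ w i, (w, i) ∈ D ∧ (G i).Adj v w) ∧
      (D.card : ℝ) ≤
        ((n : ℝ) * τ) / ((τ : ℝ) + δF) * (Real.log (((τ : ℝ) + δF) / τ) + 1) :=
  exists_multilayer_dominatingSet_of_minDegree_flatten_general n hn τ hτ G δF hδF
end

section
/- Let n ≥ 1 and τ be integers with 1 ≤ τ < ⌊n/2⌋. Then there exist simple graphs G_1, …, G_τ on a common vertex set V of size n such that: (i) each G_i is connected; (ii) the union of the edge sets of G_1, …, G_τ equals the edge set of the complete graph on V; and (iii) every vertex has degree at most ⌈n/τ⌉ in each G_i. -/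
/-!
Identify the vertices with `ℤ/n` and cut `ℤ/n` into the `τ` arcs of consecutive residues
`{x | ⌊xτ/n⌋ = i}`; each has at most `⌈n/τ⌉` elements and, as `n ≥ 2τ`, at least two.
Layer `i` joins `u ≠ v` whenever `u + v` lies in arc `i`. The layers cover all pairs, and a
vertex `v` has at most one neighbour per element of the arc, since `u` is determined by `u + v`.
If arc `i` contains `s` and `s + 1`, then `u` is joined to `u + 1` either directly or along
`u, s - u, u + 1`; as `1` generates `ℤ/n`, every layer is connected.
-/

open Set

namespace SimpleGraph

variable {α : Type*} [AddCommGroup α]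

def sumGraph (C : Set α) : SimpleGraph α where
  Adj u v := u ≠ v ∧ u + v ∈ C
  symm := ⟨fun u v h => ⟨h.1.symm, add_comm u v ▸ h.2⟩⟩
  loopless := ⟨fun _ h => h.1 rfl⟩

@[simp]
lemma sumGraph_adj {C : Set α} {u v : α} : (sumGraph C).Adj u v ↔ u ≠ v ∧ u + v ∈ C :=
  Iff.rfl

lemma iSup_sumGraph {ι : Type*} (C : ι → Set α) : ⨆ i, sumGraph (C i) = sumGraph (⋃ i, C i) := by
  ext u v
  simp [exists_and_left]

@[simp]
lemma sumGraph_univ : sumGraph (univ : Set α) = ⊤ := by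
  ext u v
  simp

lemma ncard_neighborSet_sumGraph_le [Finite α] (C : Set α) (v : α) :
    ((sumGraph C).neighborSet v).ncard ≤ C.ncard :=
  ncard_le_ncard_of_injOn (v + ·) (fun _ hu => hu.2) (add_right_injective v).injOn

lemma sumGraph_reachable_add {C : Set α} {s g : α} (hs : s ∈ C) (hsg : s + g ∈ C) (u : α) :
    (sumGraph C).Reachable u (u + g) := by
  by_cases hg : u = u + g
  · rw [← hg]
  by_cases hdirect : u + (u + g) ∈ C
  · exact Adj.reachable ⟨hg, hdirect⟩
  have h₁ : (sumGraph C).Adj u (s - u) := by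
    refine ⟨fun h => hdirect ?_, by rwa [add_sub_cancel]⟩
    rwa [← add_assoc, eq_sub_iff_add_eq.mp h]
  have h₂ : (sumGraph C).Adj (s - u) (u + g) := by
    refine ⟨fun h => hdirect ?_, by rwa [← add_assoc, sub_add_cancel]⟩
    rwa [add_comm, ← sub_eq_iff_eq_add.mp h]
  exact h₁.reachable.trans h₂.reachable

lemma connected_of_reachable_add [Nonempty α] {G : SimpleGraph α} {g : α}
    (hg : AddSubmonoid.multiples g = ⊤) (h : ∀ u, G.Reachable u (u + g)) : G.Connected := by
  have hk : ∀ (k : ℕ) u, G.Reachable u (u + k • g) := by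
    intro k
    induction k with
    | zero => simp
    | succ k ih => intro u; rw [succ_nsmul, ← add_assoc]; exact (ih u).trans (h _)
  refine (connected_iff _).2 ⟨fun u v => ?_, inferInstance⟩
  obtain ⟨k, hk'⟩ := (AddSubmonoid.mem_multiples_iff _ _).1 (hg ▸ AddSubmonoid.mem_top (v - u))
  simpa [hk'] using hk k u

end SimpleGraph

open Fin.CommRing in
lemma Fin.multiples_one_eq_top (n : ℕ) [NeZero n] : AddSubmonoid.multiples (1 : Fin n) = ⊤ :=
  eq_top_iff.2 fun v _ => (AddSubmonoid.mem_multiples_iff _ _).2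
    ⟨v.val, by rw [nsmul_eq_mul, mul_one, Fin.cast_val_eq_self]⟩

section Arcs

variable {n τ : ℕ}

def arcStart (n τ i : ℕ) : ℕ := ⌈((i * n : ℕ) : ℚ) / τ⌉₊

lemma arcStart_succ_le (i : ℕ) : arcStart n τ (i + 1) ≤ arcStart n τ i + ⌈(n : ℚ) / τ⌉₊ := by
  unfold arcStart
  push_cast
  rw [add_one_mul, add_div]
  exact Nat.ceil_add_le _ _

lemma arcStart_add_two_le (hτ : 0 < τ) (h : 2 * τ ≤ n) (i : ℕ) :
    arcStart n τ i + 2 ≤ arcStart n τ (i + 1) := by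
  have h₂ : (2 : ℚ) ≤ n / τ := by
    rw [le_div_iff₀ (by exact_mod_cast hτ)]
    exact_mod_cast h
  unfold arcStart
  push_cast
  rw [add_one_mul, add_div, ← Nat.ceil_add_natCast (by positivity)]
  exact Nat.ceil_mono (by push_cast; linarith)

lemma arcStart_le (hτ : 0 < τ) {i : ℕ} (hi : i ≤ τ) : arcStart n τ i ≤ n := by
  rw [arcStart, Nat.ceil_le, div_le_iff₀ (by exact_mod_cast hτ)]
  exact_mod_cast (by rw [mul_comm]; exact Nat.mul_le_mul_left n hi)

def arc (n τ i : ℕ) : Set (Fin n) := {x | x.val * τ / n = i}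

lemma iUnion_arc (hτ : 0 < τ) : ⋃ i : Fin τ, arc n τ i = univ :=
  eq_univ_of_forall fun x => mem_iUnion.2
    ⟨⟨x.val * τ / n, Nat.div_lt_of_lt_mul (Nat.mul_lt_mul_of_pos_right x.isLt hτ)⟩, rfl⟩

lemma mem_arc_iff (hτ : 0 < τ) {x : Fin n} {i : ℕ} :
    x ∈ arc n τ i ↔ arcStart n τ i ≤ x.val ∧ x.val < arcStart n τ (i + 1) := by
  have hτ' : (0 : ℚ) < τ := by exact_mod_cast hτ
  change x.val * τ / n = i ↔ _
  rw [Nat.div_eq_iff x.pos, arcStart, arcStart, Nat.ceil_le, Nat.lt_ceil,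
    div_le_iff₀ hτ', lt_div_iff₀ hτ']
  norm_cast
  rw [add_one_mul]
  have := x.pos
  omega

lemma ncard_arc_le (hτ : 0 < τ) (i : ℕ) : (arc n τ i).ncard ≤ ⌈(n : ℚ) / τ⌉₊ :=
  calc (arc n τ i).ncard
      ≤ (Ico (arcStart n τ i) (arcStart n τ (i + 1))).ncard :=
        ncard_le_ncard_of_injOn Fin.val (fun _ hx => (mem_arc_iff hτ).1 hx)
          Fin.val_injective.injOn (finite_Ico _ _)
    _ = arcStart n τ (i + 1) - arcStart n τ i := by simp
    _ ≤ ⌈(n : ℚ) / τ⌉₊ := by have := arcStart_succ_le (n := n) (τ := τ) i; omega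

lemma exists_add_one_mem_arc [NeZero n] (hτ : 0 < τ) (h : 2 * τ ≤ n) {i : ℕ} (hi : i < τ) :
    ∃ s : Fin n, s ∈ arc n τ i ∧ s + 1 ∈ arc n τ i := by
  have h₁ := arcStart_add_two_le hτ h i
  have h₂ : arcStart n τ (i + 1) ≤ n := arcStart_le hτ hi
  let s : Fin n := ⟨arcStart n τ i, by omega⟩
  have hs : (s + 1).val = s.val + 1 := by
    rw [Fin.val_add, Fin.val_one', Nat.one_mod_eq_one.2 (by omega),
      Nat.mod_eq_of_lt (by simp [s]; omega)]
  exact ⟨s, (mem_arc_iff hτ).2 (by simp [s]; omega), (mem_arc_iff hτ).2 (by simp [s, hs]; omega)⟩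

end Arcs

theorem exists_connected_layers_cover_complete_general (n τ : ℕ)
    (hτ1 : 1 ≤ τ) (hτ2 : τ < n / 2) :
    ∃ G : Fin τ → SimpleGraph (Fin n),
      (∀ i, (G i).Connected) ∧
      (⨆ i, G i) = ⊤ ∧
      (∀ i, ∀ v : Fin n, ((G i).neighborSet v).ncard ≤ Nat.ceil ((n : ℚ) / (τ : ℚ))) := by
  have h2τ : 2 * τ ≤ n := by omega
  have : NeZero n := ⟨by omega⟩
  refine ⟨fun i => SimpleGraph.sumGraph (arc n τ i), fun i => ?_, ?_, fun i v => ?_⟩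
  · obtain ⟨s, hs, hs₁⟩ := exists_add_one_mem_arc hτ1 h2τ i.isLt
    exact SimpleGraph.connected_of_reachable_add (Fin.multiples_one_eq_top n)
      (SimpleGraph.sumGraph_reachable_add hs hs₁)
  · rw [SimpleGraph.iSup_sumGraph, iUnion_arc hτ1, SimpleGraph.sumGraph_univ]
  · exact (SimpleGraph.ncard_neighborSet_sumGraph_le _ v).trans (ncard_arc_le hτ1 i)

/-- For integers `n ≥ 1` and `1 ≤ τ < ⌊n/2⌋`, the complete graph on `n`
vertices can be partitioned (as a union) into `τ` connected spanning layers, each of maximum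
degree at most `⌈n/τ⌉`. -/
theorem exists_connected_layers_cover_complete (n τ : ℕ) (hn : 1 ≤ n)
    (hτ1 : 1 ≤ τ) (hτ2 : τ < n / 2) :
    ∃ G : Fin τ → SimpleGraph (Fin n),
      (∀ i, (G i).Connected) ∧
      (⨆ i, G i) = ⊤ ∧
      (∀ i, ∀ v : Fin n, ((G i).neighborSet v).ncard ≤ Nat.ceil ((n : ℚ) / (τ : ℚ))) :=
  exists_connected_layers_cover_complete_general n τ hτ1 hτ2
end

section
/- Let ℓ ≥ 2 be an integer and set m = 2ℓ − 1. Consider the vertex set V consisting of the elements of ℤ/mℤ together with one additional vertex ∞ (so |V| = 2ℓ). For each i ∈ ℤ/mℤ, define the edge set c_i to consist of the edge {∞, i} together with the edges {i − j, i + j} for j = 1, …, ℓ − 1, where the arithmetic is modulo m. Then for every i ∈ ℤ/mℤ, the simple graph on V with edge set c_i ∪ c_{i+1} contains a Hamiltonian cycle. -/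
/-!
Writing `∞` for `none`, the sequence `∞, i, i + 2, i - 2, i + 4, i - 4, …, i + 1, ∞` is a
Hamiltonian cycle. The step from `i - 2k` to `i + 2k + 2` is the edge `{(i+1) - j, (i+1) + j}` of
`c (i + 1)` with `j = 2k + 1`, the step from `i + 2k` to `i - 2k` is the edge of `c i` with
`j = 2k`, where `j ≥ ℓ` is read as `m - j`; the ends `i` and `i + 1` are joined to `∞`. As `m` is
odd, these `m` residues exhaust `ZMod m`, so this closed walk of length `m + 1 = |V|` is a cycle.
-/

open SimpleGraph Function

namespace SimpleGraph

theorem cycleGraph.isHamiltonianCycle_cycle (n : ℕ) : (cycleGraph.cycle n).IsHamiltonianCycle :=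
  Walk.isHamiltonianCycle_iff_isCycle_and_length_eq.2 ⟨cycleGraph.isCycle_cycle, by simp⟩

variable {V : Type*} [Fintype V] [DecidableEq V] {G : SimpleGraph V}

theorem exists_isHamiltonianCycle_of_surjective_of_adj_add_one {n : ℕ}
    (hcard : Fintype.card V = n + 3) (f : Fin (n + 3) → V) (hf : Surjective f)
    (hadj : ∀ k, G.Adj (f k) (f (k + 1))) : ∃ a, ∃ p : G.Walk a a, p.IsHamiltonianCycle := by
  let φ : cycleGraph (n + 3) →g G :=
    ⟨f, fun {u v} huv => by
      rcases cycleGraph_adj.1 huv with h | h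
      · rw [eq_add_of_sub_eq' h]; exact (hadj v).symm
      · rw [eq_add_of_sub_eq' h]; exact hadj u⟩
  have hφ : Bijective φ := (Fintype.bijective_iff_surjective_and_card _).2 ⟨hf, by simp [hcard]⟩
  exact ⟨_, _, (cycleGraph.isHamiltonianCycle_cycle n).map hφ⟩

theorem exists_isHamiltonianCycle_of_surjOn_of_adj_succ {N : ℕ} (hN : 3 ≤ N)
    (hcard : Fintype.card V = N) (f : ℕ → V) (hf : ∀ v, ∃ k < N, f k = v)
    (hadj : ∀ k, k + 1 < N → G.Adj (f k) (f (k + 1))) (hclose : G.Adj (f (N - 1)) (f 0)) :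
    ∃ a, ∃ p : G.Walk a a, p.IsHamiltonianCycle := by
  obtain ⟨n, rfl⟩ : ∃ n, N = n + 3 := ⟨N - 3, by omega⟩
  refine exists_isHamiltonianCycle_of_surjective_of_adj_add_one hcard (fun k => f k)
    (fun v => ?_) (fun k => ?_)
  · obtain ⟨k, hk, rfl⟩ := hf v
    exact ⟨⟨k, hk⟩, rfl⟩
  · induction k using Fin.lastCases with
    | last => simpa [Fin.last_add_one] using hclose
    | cast j => simpa [Fin.coeSucc_eq_succ] using hadj j (by omega)

end SimpleGraph

theorem ZMod.sub_natCast_ne_add_natCast {m : ℕ} (hm : Odd m) (z : ZMod m) {j : ℕ}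
    (hj₀ : 0 < j) (hjm : j < m) : z - j ≠ z + j := by
  intro h
  have h2j : ((2 * j : ℕ) : ZMod m) = 0 := by push_cast; linear_combination -h
  have hdvd : m ∣ j :=
    (Nat.Coprime.symm (Nat.coprime_two_left.2 hm)).dvd_of_dvd_mul_left
      ((ZMod.natCast_eq_zero_iff _ _).1 h2j)
  exact absurd (Nat.le_of_dvd hj₀ hdvd) (by omega)

section ColourClasses

variable {ℓ m : ℕ}

def colourClass (ℓ : ℕ) {m : ℕ} (i : ZMod m) : Set (Sym2 (Option (ZMod m))) :=
  insert s(none, some i) {e | ∃ j : ℕ, 1 ≤ j ∧ j ≤ ℓ - 1 ∧ e = s(some (i - j), some (i + j))}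

theorem none_some_mem_colourClass (z : ZMod m) : s(none, some z) ∈ colourClass ℓ z :=
  Set.mem_insert _ _

theorem sub_add_mem_colourClass (hm : m = 2 * ℓ - 1) (z : ZMod m) {j : ℕ} (hj₀ : 0 < j)
    (hjm : j < m) : s(some (z - j), some (z + j)) ∈ colourClass ℓ z := by
  by_cases hjℓ : j ≤ ℓ - 1
  · exact Set.mem_insert_of_mem _ ⟨j, hj₀, hjℓ, rfl⟩
  -- `{z - j, z + j} = {z + (m - j), z - (m - j)}` and `m - j ≤ ℓ - 1`
  have hneg : ((m - j : ℕ) : ZMod m) = -j := by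
    rw [Nat.cast_sub hjm.le, ZMod.natCast_self, zero_sub]
  refine Set.mem_insert_of_mem _ ⟨m - j, by omega, by omega, ?_⟩
  rw [hneg, sub_neg_eq_add, ← sub_eq_add_neg, Sym2.eq_swap]

theorem adj_sub_add_of_colourClass_subset {S : Set (Sym2 (Option (ZMod m)))} {z : ZMod m}
    (hS : colourClass ℓ z ⊆ S) (hm : m = 2 * ℓ - 1) {j : ℕ} (hj₀ : 0 < j) (hjm : j < m) :
    (fromEdgeSet S).Adj (some (z - j)) (some (z + j)) :=
  (fromEdgeSet_adj _).2 ⟨hS (sub_add_mem_colourClass hm z hj₀ hjm),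
    Option.some_injective _ |>.ne (ZMod.sub_natCast_ne_add_natCast ⟨ℓ - 1, by omega⟩ z hj₀ hjm)⟩

theorem adj_none_some_of_colourClass_subset {S : Set (Sym2 (Option (ZMod m)))} {z : ZMod m}
    (hS : colourClass ℓ z ⊆ S) : (fromEdgeSet S).Adj none (some z) :=
  (fromEdgeSet_adj _).2 ⟨hS (none_some_mem_colourClass z), Option.some_ne_none z |>.symm⟩

/-- The sequence `i, i + 2, i - 2, i + 4, i - 4, …, i + 1` as `k` runs over `0, …, m - 1`. -/
def zigzag {m : ℕ} (i : ZMod m) (k : ℕ) : ZMod m :=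
  if Even k then i - k else i + (k + 1)

theorem zigzag_zero (i : ZMod m) : zigzag i 0 = i := by
  simp [zigzag]

theorem zigzag_sub_one (hm : Odd m) (i : ZMod m) : zigzag i (m - 1) = i + 1 := by
  obtain ⟨t, rfl⟩ := hm
  have hzero : ((2 * t + 1 : ℕ) : ZMod (2 * t + 1)) = 0 := ZMod.natCast_self _
  push_cast at hzero
  simp only [zigzag, Nat.add_sub_cancel, even_two_mul, if_true]
  push_cast
  linear_combination -hzero

theorem exists_zigzag_eq (hm : Odd m) (i x : ZMod m) : ∃ k < m, zigzag i k = x := by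
  have : NeZero m := ⟨hm.pos.ne'⟩
  have hu : (((i - x).val : ℕ) : ZMod m) = i - x := ZMod.natCast_zmod_val _
  rcases Nat.even_or_odd (i - x).val with heven | hodd
  · refine ⟨(i - x).val, ZMod.val_lt _, ?_⟩
    rw [zigzag, if_pos heven, hu, sub_sub_cancel]
  · have hlt := ZMod.val_lt (i - x)
    refine ⟨m - 1 - (i - x).val, by omega, ?_⟩
    have hodd' : ¬Even (m - 1 - (i - x).val) := by
      obtain ⟨t, rfl⟩ := hm
      obtain ⟨s, hs⟩ := hodd
      exact Nat.not_even_iff_odd.2 ⟨t - s - 1, by omega⟩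
    rw [zigzag, if_neg hodd', Nat.cast_sub (by omega), Nat.cast_sub (by omega), hu,
      ZMod.natCast_self]
    ring

theorem adj_zigzag_succ (hm : m = 2 * ℓ - 1) (i : ZMod m) {k : ℕ} (hk : k + 1 < m) :
    (fromEdgeSet (colourClass ℓ i ∪ colourClass ℓ (i + 1))).Adj
      (some (zigzag i k)) (some (zigzag i (k + 1))) := by
  rcases Nat.even_or_odd k with heven | hodd
  · have h₁ : zigzag i k = i + 1 - ((k + 1 : ℕ) : ZMod m) := by
      rw [zigzag, if_pos heven]; push_cast; ring
    have h₂ : zigzag i (k + 1) = i + 1 + ((k + 1 : ℕ) : ZMod m) := by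
      rw [zigzag, if_neg (by simpa [Nat.even_add_one] using heven)]; push_cast; ring
    rw [h₁, h₂]
    exact adj_sub_add_of_colourClass_subset Set.subset_union_right hm k.succ_pos hk
  · have h₁ : zigzag i k = i + ((k + 1 : ℕ) : ZMod m) := by
      rw [zigzag, if_neg (Nat.not_even_iff_odd.2 hodd)]; push_cast; ring
    have h₂ : zigzag i (k + 1) = i - ((k + 1 : ℕ) : ZMod m) := by
      rw [zigzag, if_pos hodd.add_one]
    rw [h₁, h₂]
    exact (adj_sub_add_of_colourClass_subset Set.subset_union_left hm k.succ_pos hk).symm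

end ColourClasses

/-- Let `ℓ ≥ 2`, `m = 2ℓ − 1`, and consider the vertex set
`Option (ZMod m)` (the element `none` plays the role of the extra vertex `∞`).
For `i : ZMod m` let `c i` consist of the edge `{∞, i}` together with the edges
`{i − j, i + j}` for `j = 1, …, ℓ − 1`.  Then for every `i`, the simple graph with edge set
`c i ∪ c (i+1)` contains a Hamiltonian cycle. -/
theorem hamiltonianCycle_of_union_of_consecutive_colour_classes
    (ℓ : ℕ) (hℓ : 2 ≤ ℓ) (m : ℕ) (hm : m = 2 * ℓ - 1)
    (c : ZMod m → Set (Sym2 (Option (ZMod m))))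
    (hc : ∀ i : ZMod m, c i =
      insert s((none : Option (ZMod m)), (some i : Option (ZMod m)))
        {e : Sym2 (Option (ZMod m)) | ∃ j : ℕ, 1 ≤ j ∧ j ≤ ℓ - 1 ∧
          e = s((some (i - (j : ZMod m)) : Option (ZMod m)),
                (some (i + (j : ZMod m)) : Option (ZMod m)))})
    (i : ZMod m) :
    ∃ a, ∃ p : (SimpleGraph.fromEdgeSet (c i ∪ c (i + 1))).Walk a a,
      p.IsHamiltonianCycle := by
  obtain rfl : c = colourClass ℓ := funext hc
  have hodd : Odd m := ⟨ℓ - 1, by omega⟩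
  have : NeZero m := ⟨hodd.pos.ne'⟩
  let f : ℕ → Option (ZMod m)
    | 0 => none
    | k + 1 => some (zigzag i k)
  refine exists_isHamiltonianCycle_of_surjOn_of_adj_succ (N := m + 1) (by omega)
    (by simp [ZMod.card]) f ?_ ?_ ?_
  · rintro (_ | x)
    · exact ⟨0, by omega, rfl⟩
    · obtain ⟨k, hk, rfl⟩ := exists_zigzag_eq hodd i x
      exact ⟨k + 1, by omega, rfl⟩
  · rintro (_ | k) hk
    · simpa [f, zigzag_zero] using adj_none_some_of_colourClass_subset Set.subset_union_left
    · exact adj_zigzag_succ hm i (by omega)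
  · obtain ⟨n, hn⟩ : ∃ n, m = n + 1 := ⟨m - 1, by omega⟩
    have hlast : zigzag i n = i + 1 := by simpa [hn] using zigzag_sub_one hodd i
    simpa [f, hn, hlast] using
      (adj_none_some_of_colourClass_subset (z := i + 1) Set.subset_union_right).symm
end

section
/- Let n ≥ 1000 be an integer and let p be a real number with (10 ln n)/n ≤ p ≤ 1. In the Erdős–Rényi random graph G(n,p), the probability that the graph is connected is at least 1 − e^{−np/3}. -/
open MeasureTheory

/-- The simple graph on `Fin n` determined by an indicator `ω` of the (unordered) pairs:
`u` and `v` are adjacent iff `u ≠ v` and the pair `{u, v}` is switched on by `ω`. -/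
def erdosRenyiGraph (n : ℕ) (ω : Sym2 (Fin n) → Bool) : SimpleGraph (Fin n) where
  Adj u v := u ≠ v ∧ ω s(u, v) = true
  symm := by
    constructor
    intro u v h
    exact ⟨h.1.symm, by rw [Sym2.eq_swap]; exact h.2⟩
  loopless := by constructor; intro u h; exact h.1 rfl

/-- The Erdős–Rényi measure: each unordered pair is included independently with
probability `p` (a product of Bernoulli measures). -/
noncomputable def erdosRenyiMeasure (n : ℕ) (p : ℝ) (hp : p ≤ 1) :
    Measure (Sym2 (Fin n) → Bool) :=
  Measure.pi fun _ : Sym2 (Fin n) =>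
    (PMF.bernoulli (Real.toNNReal p) (by simpa using hp)).toMeasure

/-!
If `G(n,p)` is disconnected, some vertex set `S` with `1 ≤ |S| ≤ n - 1` has none of its
`|S|(n - |S|)` crossing pairs present. A union bound over `S` gives
`P(disconnected) ≤ ∑ₖ C(n,k) (1-p)^{k(n-k)}`. With `m = min(k, n-k)` each term is at most
`n^m e^{-pm(n-m)} ≤ n e^{-p(n-1)}` as soon as `n ≤ e^{p(n/2-1)}`, so the sum is at most
`n² e^{-p(n-1)}`, which is below `e^{-np/3}` when `np ≥ 10 ln n` and `n ≥ 1000`.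
-/

open Finset Real

def crossingPairs {V : Type*} [Fintype V] [DecidableEq V] (S : Finset V) : Finset (Sym2 V) :=
  (S ×ˢ Sᶜ).image fun uv => s(uv.1, uv.2)

theorem card_crossingPairs {V : Type*} [Fintype V] [DecidableEq V] (S : Finset V) :
    #(crossingPairs S) = #S * (Fintype.card V - #S) := by
  rw [crossingPairs, card_image_of_injOn, card_product, card_compl]
  rintro ⟨u, v⟩ huv ⟨u', v'⟩ huv' h
  simp only [coe_product, coe_compl, Set.mem_prod, mem_coe, Set.mem_compl_iff] at huv huv'
  rcases Sym2.eq_iff.mp h with ⟨rfl, rfl⟩ | ⟨rfl, rfl⟩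
  · rfl
  · exact absurd huv.1 huv'.2

theorem SimpleGraph.exists_cut_of_not_connected {V : Type*} [Fintype V] [Nonempty V]
    {G : SimpleGraph V} (h : ¬G.Connected) :
    ∃ S : Finset V, S.Nonempty ∧ S ≠ univ ∧ ∀ u ∈ S, ∀ v ∉ S, ¬G.Adj u v := by
  classical
  obtain ⟨u, v, huv⟩ : ∃ u v, ¬G.Reachable u v := by
    simpa [SimpleGraph.connected_iff, SimpleGraph.Preconnected] using h
  refine ⟨univ.filter (G.Reachable u), ⟨u, by simp⟩, fun hS => huv ?_, ?_⟩
  · simpa using (hS.symm ▸ mem_univ v : v ∈ univ.filter (G.Reachable u))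
  · intro a ha b hb hab
    simp only [mem_filter, mem_univ, true_and] at ha hb
    exact hb (ha.trans hab.reachable)

instance isProbabilityMeasure_erdosRenyiMeasure {n : ℕ} {p : ℝ} (hp : p ≤ 1) :
    IsProbabilityMeasure (erdosRenyiMeasure n p hp) := by
  unfold erdosRenyiMeasure
  infer_instance

theorem erdosRenyiMeasure_forall_eq_false {n : ℕ} {p : ℝ} (hp0 : 0 ≤ p) (hp1 : p ≤ 1)
    (E : Finset (Sym2 (Fin n))) :
    erdosRenyiMeasure n p hp1 {ω | ∀ e ∈ E, ω e = false} = ENNReal.ofReal (1 - p) ^ #E := by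
  classical
  have hset : {ω : Sym2 (Fin n) → Bool | ∀ e ∈ E, ω e = false} =
      Set.univ.pi fun e => if e ∈ E then {false} else Set.univ := by
    ext ω
    simp only [Set.mem_ofPred_eq, Set.mem_pi, Set.mem_univ, true_implies]
    refine forall_congr' fun e => ?_
    split_ifs with he <;> simp [he]
  have hfalse : (PMF.bernoulli p.toNNReal (by simpa using hp1)).toMeasure {false} =
      ENNReal.ofReal (1 - p) := by
    rw [PMF.toMeasure_apply_singleton _ _ (measurableSet_singleton _), PMF.bernoulli_apply,
      Bool.cond_false, ENNReal.ofReal_sub 1 hp0, ENNReal.ofReal_one, ENNReal.coe_sub,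
      ENNReal.coe_one]
    rfl
  rw [erdosRenyiMeasure, hset, Measure.pi_pi]
  simp_rw [apply_ite, hfalse, measure_univ]
  rw [prod_ite_mem, univ_inter, prod_const]

theorem setOf_not_connected_subset {n : ℕ} (hn : 0 < n) :
    {ω | ¬(erdosRenyiGraph n ω).Connected} ⊆
      ⋃ k ∈ Icc 1 (n - 1), ⋃ S ∈ powersetCard k univ,
        {ω | ∀ e ∈ crossingPairs S, ω e = false} := by
  intro ω hω
  have : Nonempty (Fin n) := ⟨⟨0, hn⟩⟩
  obtain ⟨S, hSne, hSuniv, hcut⟩ := SimpleGraph.exists_cut_of_not_connected hω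
  have hcard : #S < n := by simpa using card_lt_card (ssubset_univ_iff.mpr hSuniv)
  simp only [Set.mem_iUnion, mem_Icc, mem_powersetCard, subset_univ, true_and]
  refine ⟨#S, ⟨hSne.card_pos, by omega⟩, S, rfl, ?_⟩
  simp only [crossingPairs, mem_image, mem_product, mem_compl, Set.mem_ofPred_eq]
  rintro _ ⟨⟨u, v⟩, ⟨hu, hv⟩, rfl⟩
  by_contra huv
  exact hcut u hu v hv ⟨fun h => hv (h ▸ hu), by simpa using huv⟩

theorem erdosRenyiMeasure_not_connected_le {n : ℕ} {p : ℝ} (hp0 : 0 ≤ p) (hp1 : p ≤ 1)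
    (hn : 0 < n) :
    erdosRenyiMeasure n p hp1 {ω | ¬(erdosRenyiGraph n ω).Connected} ≤
      ENNReal.ofReal (∑ k ∈ Icc 1 (n - 1), n.choose k * (1 - p) ^ (k * (n - k))) := by
  have h1p : 0 ≤ 1 - p := by linarith
  calc erdosRenyiMeasure n p hp1 {ω | ¬(erdosRenyiGraph n ω).Connected}
      ≤ ∑ k ∈ Icc 1 (n - 1), ∑ S ∈ powersetCard k univ,
          erdosRenyiMeasure n p hp1 {ω | ∀ e ∈ crossingPairs S, ω e = false} :=
        (measure_mono (setOf_not_connected_subset hn)).trans <|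
          (measure_biUnion_finset_le _ _).trans <|
            sum_le_sum fun k _ => measure_biUnion_finset_le _ _
    _ = ENNReal.ofReal (∑ k ∈ Icc 1 (n - 1), n.choose k * (1 - p) ^ (k * (n - k))) := by
        rw [ENNReal.ofReal_sum_of_nonneg fun k _ => by positivity]
        refine sum_congr rfl fun k _ => ?_
        rw [sum_congr rfl fun S hS => by
          rw [erdosRenyiMeasure_forall_eq_false hp0 hp1, card_crossingPairs, Fintype.card_fin,
            (mem_powersetCard.mp hS).2]]
        rw [sum_const, card_powersetCard, card_univ, Fintype.card_fin, nsmul_eq_mul,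
          ENNReal.ofReal_mul (by positivity), ENNReal.ofReal_natCast, ENNReal.ofReal_pow h1p]

theorem one_sub_pow_le_exp_neg_mul {p : ℝ} (hp1 : p ≤ 1) (e : ℕ) :
    (1 - p) ^ e ≤ exp (-(p * e)) := by
  rw [neg_mul_eq_neg_mul, mul_comm, exp_nat_mul]
  exact pow_le_pow_left₀ (by linarith) (by linarith [add_one_le_exp (-p)]) e

theorem pow_mul_exp_neg_le {n m : ℕ} {p : ℝ} (hn : 0 < n) (hm : 1 ≤ m)
    (hlog : log n ≤ p * (n - m - 1)) :
    (n : ℝ) ^ m * exp (-(p * (m * (n - m)))) ≤ n * exp (-(p * (n - 1))) := by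
  have hn' : (0 : ℝ) < n := by exact_mod_cast hn
  -- `m (n - m) = (n - 1) + (m - 1) (n - m - 1)`
  have hsplit : (n : ℝ) ^ m * exp (-(p * (m * (n - m)))) =
      n * exp (-(p * (n - 1))) * (n * exp (-(p * (n - m - 1)))) ^ (m - 1) := by
    rw [mul_pow, ← exp_nat_mul, mul_mul_mul_comm, ← pow_succ', ← exp_add, Nat.sub_add_cancel hm]
    congr 2
    push_cast [Nat.cast_sub hm]
    ring
  have hbase : (n : ℝ) * exp (-(p * (n - m - 1))) ≤ 1 := by
    rw [exp_neg, ← div_eq_mul_inv, div_le_one (exp_pos _)]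
    exact (log_le_iff_le_exp hn').mp hlog
  rw [hsplit]
  exact mul_le_of_le_one_right (by positivity) (pow_le_one₀ (by positivity) hbase)

theorem choose_mul_one_sub_pow_le {n k : ℕ} {p : ℝ} (hp0 : 0 ≤ p) (hp1 : p ≤ 1)
    (hk : 1 ≤ k) (hkn : k < n) (hlog : log n ≤ p * (n / 2 - 1)) :
    n.choose k * (1 - p) ^ (k * (n - k)) ≤ n * exp (-(p * (n - 1))) := by
  wlog h2k : 2 * k ≤ n generalizing k
  · have := this (k := n - k) (by omega) (by omega) (by omega)
    rwa [Nat.choose_symm hkn.le, Nat.sub_sub_self hkn.le, mul_comm (n - k)] at this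
  have hk' : (2 * k : ℝ) ≤ n := by exact_mod_cast h2k
  calc n.choose k * (1 - p) ^ (k * (n - k))
      ≤ (n : ℝ) ^ k * exp (-(p * (k * (n - k)))) := by
        refine mul_le_mul (by exact_mod_cast Nat.choose_le_pow n k) ?_
          (pow_nonneg (by linarith) _) (by positivity)
        refine (one_sub_pow_le_exp_neg_mul hp1 _).trans_eq ?_
        rw [Nat.cast_mul, Nat.cast_sub hkn.le]
    _ ≤ n * exp (-(p * (n - 1))) := pow_mul_exp_neg_le (by omega) hk (by nlinarith)

theorem sum_choose_mul_one_sub_pow_le {n : ℕ} {p : ℝ} (hp0 : 0 ≤ p) (hp1 : p ≤ 1)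
    (hlog : log n ≤ p * (n / 2 - 1)) :
    ∑ k ∈ Icc 1 (n - 1), n.choose k * (1 - p) ^ (k * (n - k)) ≤
      n ^ 2 * exp (-(p * (n - 1))) := by
  calc ∑ k ∈ Icc 1 (n - 1), n.choose k * (1 - p) ^ (k * (n - k))
      ≤ ∑ _k ∈ Icc 1 (n - 1), n * exp (-(p * (n - 1))) := by
        refine sum_le_sum fun k hk => ?_
        rw [mem_Icc] at hk
        exact choose_mul_one_sub_pow_le hp0 hp1 hk.1 (by omega) hlog
    _ ≤ n ^ 2 * exp (-(p * (n - 1))) := by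
        rw [sum_const, Nat.card_Icc, nsmul_eq_mul, sq, mul_assoc]
        gcongr
        exact_mod_cast Nat.sub_le n 1

theorem sq_mul_exp_neg_le {n : ℕ} {p : ℝ} (hn : 1000 ≤ n) (hp0 : 0 ≤ p)
    (h : 10 * log n ≤ p * n) :
    (n : ℝ) ^ 2 * exp (-(p * (n - 1))) ≤ exp (-(n * p) / 3) := by
  have hn' : (1000 : ℝ) ≤ n := by exact_mod_cast hn
  nth_rw 1 [← exp_log (by positivity : (0 : ℝ) < n)]
  rw [← exp_nat_mul, ← exp_add, exp_le_exp]
  push_cast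
  nlinarith

/-- For `n ≥ 1000` and `(10 ln n)/n ≤ p ≤ 1`, the random graph `G(n,p)` is
connected with probability at least `1 − e^{−np/3}`. -/
theorem erdosRenyi_connected_prob (n : ℕ) (hn : 1000 ≤ n) (p : ℝ)
    (hp1 : 10 * Real.log n / n ≤ p) (hp2 : p ≤ 1) :
    ENNReal.ofReal (1 - Real.exp (-((n : ℝ) * p) / 3)) ≤
      erdosRenyiMeasure n p hp2 {ω | (erdosRenyiGraph n ω).Connected} := by
  have hn' : (1000 : ℝ) ≤ n := by exact_mod_cast hn
  have h10 : 10 * log n ≤ p * n := (div_le_iff₀ (by positivity)).mp hp1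
  have hp0 : 0 ≤ p := by nlinarith [log_nonneg (by linarith : (1 : ℝ) ≤ n)]
  have hlog : log n ≤ p * (n / 2 - 1) := by nlinarith
  have hdisconnected : erdosRenyiMeasure n p hp2 {ω | ¬(erdosRenyiGraph n ω).Connected} ≤
      ENNReal.ofReal (exp (-(n * p) / 3)) :=
    (erdosRenyiMeasure_not_connected_le hp0 hp2 (by omega)).trans <| ENNReal.ofReal_le_ofReal <|
      (sum_choose_mul_one_sub_pow_le hp0 hp2 hlog).trans (sq_mul_exp_neg_le hn hp0 h10)
  rw [← compl_compl {ω | (erdosRenyiGraph n ω).Connected}, Set.compl_ofPred,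
    prob_compl_eq_one_sub (Set.toFinite _).measurableSet,
    ENNReal.ofReal_sub _ (exp_nonneg _), ENNReal.ofReal_one]
  exact tsub_le_tsub_left hdisconnected 1
end
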